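/- arXiv:1012.2650 — 3 statements merged into one kernel-verified Lean document; each statement's English description precedes it below -/
import Mathlib

section
/- A real symmetric 2×2 matrix Σ satisfies Σ + i·J ≥ 0 (as a complex Hermitian matrix) if and only if Σ ≥ 0 and det Σ ≥ 1, where J = [[0,1],[-1,0]]. -/
/-!
A Hermitian `2 × 2` matrix is positive semidefinite exactly when its trace and determinant are
nonnegative, since these are the sum and the product of its two real eigenvalues. The matrix
`Σ + i J` is Hermitian exactly when `Σ` is symmetric, it has the trace of `Σ`, and, because
`(b + i)(b - i) = b² + 1`, its determinant is `det Σ - 1`.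
-/

open Matrix Complex ComplexOrder

/-- The standard symplectic 2×2 matrix `J = [[0,1],[-1,0]]`, as a complex matrix. -/
def JmatC : Matrix (Fin 2) (Fin 2) ℂ := !![0, 1; -1, 0]

lemma nonneg_and_nonneg_iff_add_nonneg_and_mul_nonneg {R : Type*} [CommRing R] [LinearOrder R]
    [IsStrictOrderedRing R] {x y : R} : 0 ≤ x ∧ 0 ≤ y ↔ 0 ≤ x + y ∧ 0 ≤ x * y := by
  refine ⟨fun ⟨hx, hy⟩ ↦ ⟨add_nonneg hx hy, mul_nonneg hx hy⟩, fun ⟨hsum, hprod⟩ ↦ ?_⟩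
  rcases mul_nonneg_iff.mp hprod with h | h
  · exact h
  · constructor <;> linarith

namespace Matrix

variable {𝕜 : Type*} [RCLike 𝕜]

theorem IsHermitian.posSemidef_iff_trace_nonneg_and_det_nonneg {A : Matrix (Fin 2) (Fin 2) 𝕜}
    (hA : A.IsHermitian) : A.PosSemidef ↔ 0 ≤ A.trace ∧ 0 ≤ A.det := by
  rw [hA.posSemidef_iff_eigenvalues_nonneg, hA.trace_eq_sum_eigenvalues,
    hA.det_eq_prod_eigenvalues, Fin.sum_univ_two, Fin.prod_univ_two, Pi.le_def, Fin.forall_fin_two,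
    ← RCLike.ofReal_add, ← RCLike.ofReal_mul, RCLike.ofReal_nonneg, RCLike.ofReal_nonneg]
  exact nonneg_and_nonneg_iff_add_nonneg_and_mul_nonneg

theorem posSemidef_fin_two_iff {A : Matrix (Fin 2) (Fin 2) 𝕜} :
    A.PosSemidef ↔ A.IsHermitian ∧ 0 ≤ A.trace ∧ 0 ≤ A.det :=
  ⟨fun h ↦ ⟨h.isHermitian, h.isHermitian.posSemidef_iff_trace_nonneg_and_det_nonneg.1 h⟩,
    fun ⟨hA, h⟩ ↦ hA.posSemidef_iff_trace_nonneg_and_det_nonneg.2 h⟩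

end Matrix

section

variable {S : Matrix (Fin 2) (Fin 2) ℝ}

lemma isHermitian_map_ofReal_add_I_smul_JmatC_iff :
    (S.map (fun a => (a : ℂ)) + Complex.I • JmatC).IsHermitian ↔ S.IsHermitian := by
  simp only [IsHermitian, ← Matrix.ext_iff, Fin.forall_fin_two]
  simp [JmatC, Complex.ext_iff]

lemma trace_map_ofReal_add_I_smul_JmatC :
    (S.map (fun a => (a : ℂ)) + Complex.I • JmatC).trace = (S.trace : ℂ) := by
  simp [JmatC, trace_fin_two]

lemma det_map_ofReal_add_I_smul_JmatC (hS : S.IsHermitian) :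
    (S.map (fun a => (a : ℂ)) + Complex.I • JmatC).det = ((S.det - 1 : ℝ) : ℂ) := by
  have hsymm : S 1 0 = S 0 1 := congrFun₂ hS 0 1
  simp [JmatC, det_fin_two, hsymm]
  linear_combination I_sq

end

theorem sigma_add_I_J_posSemidef_iff_general (S : Matrix (Fin 2) (Fin 2) ℝ) :
    (S.map (fun a => (a : ℂ)) + Complex.I • JmatC).PosSemidef ↔
      S.PosSemidef ∧ 1 ≤ S.det := by
  rw [posSemidef_fin_two_iff, posSemidef_fin_two_iff, isHermitian_map_ofReal_add_I_smul_JmatC_iff,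
    trace_map_ofReal_add_I_smul_JmatC, zero_le_real]
  constructor
  · rintro ⟨hS, htr, hdet⟩
    rw [det_map_ofReal_add_I_smul_JmatC hS, zero_le_real, sub_nonneg] at hdet
    exact ⟨⟨hS, htr, by linarith⟩, hdet⟩
  · rintro ⟨⟨hS, htr, -⟩, hdet⟩
    rw [det_map_ofReal_add_I_smul_JmatC hS, zero_le_real, sub_nonneg]
    exact ⟨hS, htr, hdet⟩

/-- A real symmetric 2×2 matrix `Σ` satisfies `Σ + i·J ≥ 0` (as a complex Hermitian
matrix) if and only if `Σ ≥ 0` and `det Σ ≥ 1`. -/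
theorem sigma_add_I_J_posSemidef_iff (S : Matrix (Fin 2) (Fin 2) ℝ)
    (hS : S.IsSymm) :
    (S.map (fun a => (a : ℂ)) + Complex.I • JmatC).PosSemidef ↔
      S.PosSemidef ∧ 1 ≤ S.det :=
  sigma_add_I_J_posSemidef_iff_general S
end

section
/- Let ρ₀ = (1/2)·diag(1+u, 1−u) with 0 ≤ u ≤ 1, and σ₀ = (1/2)·[[1+z, x−iy],[x+iy, 1−z]] a 2×2 density matrix. Then inf over λ ∈ [0,1] of (1/2)·‖ Φ_λ(ρ₀) − σ₀ ‖₁, where Φ_λ(X) = (1−λ)(tr X)/2 · I + λ X, equals (1/2)√((z−u)²+x²+y²) if z ≥ u, equals (1/2)√(x²+y²) if 0 ≤ z ≤ u, and equals (1/2)√(z²+x²+y²) if z ≤ 0. -/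
/-!
In Bloch coordinates the depolarizing channel scales the Bloch vector by `λ`, and the difference
`M` of the states with Bloch vectors `r` and `s` satisfies `Mᴴ M = |r - s|² / 4 • 1`, so its trace
norm is `|r - s|`. The objective is therefore `½ |(0, 0, λu) - (x, y, z)|`, which is minimized by
choosing `λu ∈ [0, u]` as the point of `[0, u]` nearest to `z`: `u`, `z` or `0` in the three cases.
-/

open Matrix Complex ComplexOrder

/-- Trace norm (sum of singular values) of a complex square matrix. -/
noncomputable def traceNorm {n : ℕ} (A : Matrix (Fin n) (Fin n) ℂ) : ℝ :=
  ∑ i, Real.sqrt ((Matrix.posSemidef_conjTranspose_mul_self A).1.eigenvalues i)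

/-- The qubit depolarizing channel `Φ_λ(X) = (1−λ)(tr X)/2 · I + λ X`. -/
noncomputable def depol (l : ℝ) (X : Matrix (Fin 2) (Fin 2) ℂ) :
    Matrix (Fin 2) (Fin 2) ℂ :=
  (((1 - l : ℝ) : ℂ) * X.trace / 2) • (1 : Matrix (Fin 2) (Fin 2) ℂ) + (l : ℂ) • X

theorem Matrix.IsHermitian.eigenvalues_eq_of_eq_smul_one {n : ℕ}
    {A : Matrix (Fin n) (Fin n) ℂ} (hA : A.IsHermitian) {c : ℝ} (h : A = (c : ℂ) • 1)
    (i : Fin n) : hA.eigenvalues i = c := by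
  have : Nonempty (Fin n) := ⟨i⟩
  have hspec : spectrum ℝ A = {c} := by
    rw [h, Complex.coe_smul, ← Algebra.algebraMap_eq_smul_one, spectrum.scalar_eq]
  simpa [hspec] using hA.eigenvalues_mem_spectrum_real i

theorem traceNorm_eq_of_conjTranspose_mul_self_eq {n : ℕ} (A : Matrix (Fin n) (Fin n) ℂ)
    {c : ℝ} (h : Aᴴ * A = (c : ℂ) • 1) : traceNorm A = n * √c := by
  simp [traceNorm, IsHermitian.eigenvalues_eq_of_eq_smul_one _ h]

/-- The qubit state `(1 + a σₓ + b σ_y + c σ_z) / 2` with Bloch vector `(a, b, c)`. -/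
noncomputable def blochState (a b c : ℝ) : Matrix (Fin 2) (Fin 2) ℂ :=
  (1 / 2 : ℂ) • !![1 + (c : ℂ), (a : ℂ) - I * (b : ℂ); (a : ℂ) + I * (b : ℂ), 1 - (c : ℂ)]

theorem depol_blochState (l a b c : ℝ) :
    depol l (blochState a b c) = blochState (l * a) (l * b) (l * c) := by
  ext i j
  fin_cases i <;> fin_cases j <;>
    simp [depol, blochState, trace_fin_two] <;> ring

theorem conjTranspose_mul_self_blochState_sub (a b c a' b' c' : ℝ) :
    (blochState a b c - blochState a' b' c')ᴴ * (blochState a b c - blochState a' b' c') =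
      ((((a - a') ^ 2 + (b - b') ^ 2 + (c - c') ^ 2) / 4 : ℝ) : ℂ) • 1 := by
  ext i j
  fin_cases i <;> fin_cases j <;>
    simp [blochState, mul_apply, Fin.sum_univ_two, Complex.ext_iff, sq] <;>
    exact ⟨by ring, by ring⟩

theorem traceNorm_blochState_sub (a b c a' b' c' : ℝ) :
    traceNorm (blochState a b c - blochState a' b' c') =
      √((a - a') ^ 2 + (b - b') ^ 2 + (c - c') ^ 2) := by
  rw [traceNorm_eq_of_conjTranspose_mul_self_eq _ (conjTranspose_mul_self_blochState_sub ..),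
    show (4 : ℝ) = 2 ^ 2 by norm_num, Real.sqrt_div' _ (sq_nonneg 2), Real.sqrt_sq zero_le_two]
  push_cast
  field_simp

theorem sInf_image_eq_of_isMinOn {α β : Type*} [ConditionallyCompleteLattice β] {f : α → β}
    {s : Set α} {a : α} (ha : a ∈ s) (hmin : IsMinOn f s a) : sInf (f '' s) = f a :=
  IsLeast.csInf_eq ⟨Set.mem_image_of_mem f ha, Set.forall_mem_image.2 (isMinOn_iff.1 hmin)⟩

section Projection

variable {u z : ℝ}

theorem isMinOn_sq_mul_sub_of_le (hu : 0 ≤ u) (hz : u ≤ z) :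
    IsMinOn (fun l => (l * u - z) ^ 2) (Set.Icc 0 1) 1 :=
  isMinOn_iff.2 fun l ⟨_, hl1⟩ => by nlinarith [mul_le_of_le_one_left hu hl1]

theorem isMinOn_sq_mul_sub_of_nonpos (hu : 0 ≤ u) (hz : z ≤ 0) :
    IsMinOn (fun l => (l * u - z) ^ 2) (Set.Icc 0 1) 0 :=
  isMinOn_iff.2 fun l ⟨hl0, _⟩ => by nlinarith [mul_nonneg hl0 hu]

theorem div_mem_Icc_zero_one (hz0 : 0 ≤ z) (hzu : z ≤ u) : z / u ∈ Set.Icc (0 : ℝ) 1 :=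
  ⟨div_nonneg hz0 (hz0.trans hzu), div_le_one_of_le₀ hzu (hz0.trans hzu)⟩

theorem isMinOn_sq_mul_sub_of_mem_Icc (hz0 : 0 ≤ z) (hzu : z ≤ u) :
    IsMinOn (fun l => (l * u - z) ^ 2) (Set.Icc 0 1) (z / u) := by
  refine isMinOn_iff.2 fun l _ => ?_
  rw [div_mul_cancel_of_imp fun hu => by linarith, sub_self, zero_pow two_ne_zero]
  positivity

end Projection

theorem depolarizing_approx_general (u x y z : ℝ) (hu0 : 0 ≤ u)
    (ρ₀ σ₀ : Matrix (Fin 2) (Fin 2) ℂ)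
    (hρ₀ : ρ₀ = (1 / 2 : ℂ) • !![1 + (u : ℂ), 0; 0, 1 - (u : ℂ)])
    (hσ₀ : σ₀ = (1 / 2 : ℂ) • !![1 + (z : ℂ), (x : ℂ) - Complex.I * (y : ℂ);
        (x : ℂ) + Complex.I * (y : ℂ), 1 - (z : ℂ)]) :
    ((z ≥ u → sInf ((fun l => (1 / 2) * traceNorm (depol l ρ₀ - σ₀)) '' Set.Icc 0 1)
        = (1 / 2) * Real.sqrt ((z - u) ^ 2 + x ^ 2 + y ^ 2)) ∧
      (0 ≤ z → z ≤ u → sInf ((fun l => (1 / 2) * traceNorm (depol l ρ₀ - σ₀)) '' Set.Icc 0 1)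
        = (1 / 2) * Real.sqrt (x ^ 2 + y ^ 2)) ∧
      (z ≤ 0 → sInf ((fun l => (1 / 2) * traceNorm (depol l ρ₀ - σ₀)) '' Set.Icc 0 1)
        = (1 / 2) * Real.sqrt (z ^ 2 + x ^ 2 + y ^ 2))) := by
  have hρ : ρ₀ = blochState 0 0 u := by
    rw [hρ₀, blochState]
    simp
  have hσ : σ₀ = blochState x y z := hσ₀
  have hobj : (fun l => (1 / 2) * traceNorm (depol l ρ₀ - σ₀)) =
      fun l => (1 / 2) * √(x ^ 2 + y ^ 2 + (l * u - z) ^ 2) := by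
    funext l
    rw [hρ, hσ, depol_blochState, traceNorm_blochState_sub]
    ring_nf
  have hmono : Monotone fun q => (1 / 2 : ℝ) * √(x ^ 2 + y ^ 2 + q) :=
    fun _ _ h => by dsimp only; gcongr
  rw [hobj]
  refine ⟨fun hz => ?_, fun hz0 hzu => ?_, fun hz => ?_⟩
  · refine (sInf_image_eq_of_isMinOn (Set.right_mem_Icc.2 zero_le_one)
      ((isMinOn_sq_mul_sub_of_le hu0 hz).comp_mono hmono)).trans ?_
    dsimp only [Function.comp]
    ring_nf
  · refine (sInf_image_eq_of_isMinOn (div_mem_Icc_zero_one hz0 hzu)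
      ((isMinOn_sq_mul_sub_of_mem_Icc hz0 hzu).comp_mono hmono)).trans ?_
    simp [div_mul_cancel_of_imp fun hu : u = 0 => by linarith]
  · refine (sInf_image_eq_of_isMinOn (Set.left_mem_Icc.2 zero_le_one)
      ((isMinOn_sq_mul_sub_of_nonpos hu0 hz).comp_mono hmono)).trans ?_
    dsimp only [Function.comp]
    ring_nf

/-- The optimal approximation of `σ₀` by depolarized versions of
`ρ₀ = (1/2)diag(1+u,1−u)`, in trace norm distance. -/
theorem depolarizing_approx (u x y z : ℝ) (hu0 : 0 ≤ u) (hu1 : u ≤ 1)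
    (hσ : x ^ 2 + y ^ 2 + z ^ 2 ≤ 1)
    (ρ₀ σ₀ : Matrix (Fin 2) (Fin 2) ℂ)
    (hρ₀ : ρ₀ = (1 / 2 : ℂ) • !![1 + (u : ℂ), 0; 0, 1 - (u : ℂ)])
    (hσ₀ : σ₀ = (1 / 2 : ℂ) • !![1 + (z : ℂ), (x : ℂ) - Complex.I * (y : ℂ);
        (x : ℂ) + Complex.I * (y : ℂ), 1 - (z : ℂ)]) :
    ((z ≥ u → sInf ((fun l => (1 / 2) * traceNorm (depol l ρ₀ - σ₀)) '' Set.Icc 0 1)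
        = (1 / 2) * Real.sqrt ((z - u) ^ 2 + x ^ 2 + y ^ 2)) ∧
      (0 ≤ z → z ≤ u → sInf ((fun l => (1 / 2) * traceNorm (depol l ρ₀ - σ₀)) '' Set.Icc 0 1)
        = (1 / 2) * Real.sqrt (x ^ 2 + y ^ 2)) ∧
      (z ≤ 0 → sInf ((fun l => (1 / 2) * traceNorm (depol l ρ₀ - σ₀)) '' Set.Icc 0 1)
        = (1 / 2) * Real.sqrt (z ^ 2 + x ^ 2 + y ^ 2))) :=
  depolarizing_approx_general u x y z hu0 ρ₀ σ₀ hρ₀ hσ₀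
end

section
/- Let ρ_θ, θ ∈ Θ, be density matrices on a finite-dimensional Hilbert space whose real span is the full space of Hermitian matrices, and let Γ be a map from {ρ_θ} into density matrices such that for every ε > 0 and every 2-outcome POVM (M, I−M) there exists a 2-outcome POVM (M′, I−M′) with |tr Γ(ρ_θ)M − tr ρ_θ M′| < ε/2 for all θ. Then Γ extends to a (unique) linear, positive, trace preserving map on all Hermitian matrices. -/
open Matrix Complex ComplexOrder

/-- A 2-outcome POVM element: `0 ≤ M ≤ I`. -/
def IsEffect {n : ℕ} (M : Matrix (Fin n) (Fin n) ℂ) : Prop :=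
  M.PosSemidef ∧ (1 - M).PosSemidef

/-!
Extend `Γ` along `x ↦ ∑ x θ • ρ θ` on finitely supported real coefficients `x`. The
approximation of effects passes to such combinations with error `ε · ∑ |x θ|`; hence if
`∑ x θ • ρ θ ≥ 0`, then `∑ x θ • Γ θ` has nonnegative trace against every effect, and testing
against rescaled rank-one projections shows that it is positive semidefinite. Applied to `±x`,
this gives `∑ x θ • ρ θ = 0 → ∑ x θ • Γ θ = 0`, so `Γ` factors through a linear map, which is
positive and trace preserving on combinations of the `ρ θ`, i.e. on all Hermitian matrices, and
unique there.
-/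

theorem LinearMap.exists_comp_eq_of_ker_le {K V V' W : Type*} [DivisionRing K] [AddCommGroup V]
    [Module K V] [AddCommGroup V'] [Module K V'] [AddCommGroup W] [Module K W]
    {f : V →ₗ[K] V'} {g : V →ₗ[K] W} (h : ker f ≤ ker g) : ∃ e : V' →ₗ[K] W, e ∘ₗ f = g := by
  obtain ⟨l, hl⟩ := ((ker f).liftQ f le_rfl).exists_leftInverse_of_injective
    (Submodule.ker_liftQ_eq_bot _ _ _ le_rfl)
  refine ⟨(ker f).liftQ g h ∘ₗ l, LinearMap.ext fun v => ?_⟩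
  have hv : l (f v) = (ker f).mkQ v := LinearMap.congr_fun hl ((ker f).mkQ v)
  simp [hv]

theorem Finsupp.linearCombination_sub {Θ R E : Type*} [Ring R] [AddCommGroup E] [Module R E]
    (v w : Θ → E) (x : Θ →₀ R) :
    linearCombination R (v - w) x = linearCombination R v x - linearCombination R w x := by
  simp [linearCombination_apply, smul_sub, Finsupp.sum_sub]

theorem Finsupp.norm_linearCombination_le {Θ 𝕜 E : Type*} [NormedField 𝕜]
    [SeminormedAddCommGroup E] [NormedSpace 𝕜 E] {g : Θ → E} {C : ℝ} (hg : ∀ θ, ‖g θ‖ ≤ C)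
    (x : Θ →₀ 𝕜) : ‖linearCombination 𝕜 g x‖ ≤ (x.sum fun _ a => ‖a‖) * C := by
  rw [linearCombination_apply, Finsupp.sum, Finsupp.sum, Finset.sum_mul]
  refine (norm_sum_le _ _).trans (Finset.sum_le_sum fun θ _ => ?_)
  rw [norm_smul]
  exact mul_le_mul_of_nonneg_left (hg θ) (norm_nonneg _)

namespace Matrix

section LinearCombination

variable {ι Θ : Type*} {f : Θ → Matrix ι ι ℂ}

theorem isHermitian_linearCombination (hf : ∀ θ, (f θ).IsHermitian) (x : Θ →₀ ℝ) :
    (Finsupp.linearCombination ℝ f x).IsHermitian := by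
  induction x using Finsupp.induction_linear with
  | zero => simp
  | add x y hx hy => simpa using hx.add hy
  | single θ a => simp [IsHermitian, conjTranspose_smul, (hf θ).eq]

variable [Fintype ι]

theorem trace_linearCombination (x : Θ →₀ ℝ) :
    (Finsupp.linearCombination ℝ f x).trace =
      Finsupp.linearCombination ℝ (fun θ => (f θ).trace) x :=
  Finsupp.apply_linearCombination ℝ (traceLinearMap ι ℝ ℂ) f x

theorem trace_linearCombination_mul (x : Θ →₀ ℝ) (M : Matrix ι ι ℂ) :
    (Finsupp.linearCombination ℝ f x * M).trace =
      Finsupp.linearCombination ℝ (fun θ => (f θ * M).trace) x :=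
  Finsupp.apply_linearCombination ℝ (traceLinearMap ι ℝ ℂ ∘ₗ LinearMap.mulRight ℝ M) f x

end LinearCombination

theorem PosSemidef.trace_mul_nonneg {ι : Type*} [Fintype ι] [DecidableEq ι]
    {A B : Matrix ι ι ℂ} (hA : A.PosSemidef) (hB : B.PosSemidef) : 0 ≤ (A * B).trace := by
  open scoped MatrixOrder in
  obtain ⟨C, rfl⟩ := CStarAlgebra.nonneg_iff_eq_star_mul_self.mp hB.nonneg
  rw [← Matrix.mul_assoc, Matrix.trace_mul_comm, ← Matrix.mul_assoc]
  exact (hA.mul_mul_conjTranspose_same C).trace_nonneg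

variable {k : ℕ}

open scoped Matrix.Norms.L2Operator MatrixOrder in
/-- In the C⋆-algebra of matrices, `0 ≤ a` satisfies `a ≤ 1` iff `‖a‖ ≤ 1`, so `c = (‖A‖ + 1)⁻¹`
works for the operator norm. -/
theorem PosSemidef.exists_pos_isEffect_smul {A : Matrix (Fin k) (Fin k) ℂ} (hA : A.PosSemidef) :
    ∃ c : ℝ, 0 < c ∧ IsEffect (c • A) := by
  have hc : 0 < (‖A‖ + 1)⁻¹ := by positivity
  have hcA : 0 ≤ (‖A‖ + 1)⁻¹ • A := smul_nonneg hc.le hA.nonneg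
  refine ⟨_, hc, hcA.posSemidef, le_iff.mp ?_⟩
  rw [← CStarAlgebra.norm_le_one_iff_of_nonneg _ hcA, norm_smul, Real.norm_of_nonneg hc.le,
    inv_mul_le_one₀ (by positivity)]
  linarith

theorem IsHermitian.posSemidef_of_forall_isEffect {B : Matrix (Fin k) (Fin k) ℂ}
    (hB : B.IsHermitian) (h : ∀ M, IsEffect M → 0 ≤ ((B * M).trace).re) : B.PosSemidef := by
  refine PosSemidef.of_dotProduct_mulVec_nonneg hB fun v => ?_
  obtain ⟨c, hc, hM⟩ := (posSemidef_vecMulVec_self_star v).exists_pos_isEffect_smul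
  have hre : 0 ≤ c * (star v ⬝ᵥ (B *ᵥ v)).re := by
    simpa [Matrix.mul_smul, mul_vecMulVec, dotProduct_comm (B *ᵥ v)] using h _ hM
  have him : (star v ⬝ᵥ (B *ᵥ v)).im = 0 := hB.im_star_dotProduct_mulVec_self v
  exact Complex.nonneg_iff.mpr ⟨nonneg_of_mul_nonneg_right hre hc, him.symm⟩

end Matrix

/-- Buscemi's condition for the two-outcome POVMs `(M, 1 - M)`: for states of unit trace both
outcomes contribute the same error, whence `ε / 2`. -/
def IsTwoStatisticalMorphism {n m : ℕ} {Θ : Type*} (ρ : Θ → Matrix (Fin n) (Fin n) ℂ)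
    (Γ : Θ → Matrix (Fin m) (Fin m) ℂ) : Prop :=
  ∀ ε > (0 : ℝ), ∀ M : Matrix (Fin m) (Fin m) ℂ, IsEffect M →
    ∃ M' : Matrix (Fin n) (Fin n) ℂ, IsEffect M' ∧
      ∀ θ, ‖(Γ θ * M).trace - (ρ θ * M').trace‖ < ε / 2

namespace IsTwoStatisticalMorphism

open Finsupp

variable {n m : ℕ} {Θ : Type*} {ρ : Θ → Matrix (Fin n) (Fin n) ℂ}
  {Γ : Θ → Matrix (Fin m) (Fin m) ℂ}

theorem exists_norm_trace_linearCombination_sub_lt (hmor : IsTwoStatisticalMorphism ρ Γ)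
    (x : Θ →₀ ℝ) {M : Matrix (Fin m) (Fin m) ℂ} (hM : IsEffect M) {ε : ℝ} (hε : 0 < ε) :
    ∃ M', IsEffect M' ∧
      ‖(linearCombination ℝ Γ x * M).trace - (linearCombination ℝ ρ x * M').trace‖ < ε := by
  set S := x.sum fun _ a => ‖a‖
  have hS : 0 ≤ S := Finset.sum_nonneg fun _ _ => norm_nonneg _
  obtain ⟨M', hM', hclose⟩ := hmor (ε / (S + 1)) (by positivity) M hM
  refine ⟨M', hM', ?_⟩
  rw [trace_linearCombination_mul, trace_linearCombination_mul, ← linearCombination_sub]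
  calc _ ≤ S * (ε / (S + 1) / 2) := norm_linearCombination_le (fun θ => (hclose θ).le) x
    _ < ε := by
      rw [mul_div_assoc', mul_div_assoc', div_div, div_lt_iff₀ (by positivity)]
      nlinarith

theorem posSemidef_linearCombination (hmor : IsTwoStatisticalMorphism ρ Γ)
    (hΓ : ∀ θ, (Γ θ).IsHermitian) {x : Θ →₀ ℝ} (hx : (linearCombination ℝ ρ x).PosSemidef) :
    (linearCombination ℝ Γ x).PosSemidef := by
  refine (isHermitian_linearCombination hΓ x).posSemidef_of_forall_isEffect fun M hM => ?_
  refine le_of_forall_pos_le_add fun ε hε => ?_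
  obtain ⟨M', hM', hclose⟩ := hmor.exists_norm_trace_linearCombination_sub_lt x hM hε
  have hnonneg := (Complex.nonneg_iff.mp (hx.trace_mul_nonneg hM'.1)).1
  have hre := (Complex.abs_re_le_norm _).trans hclose.le
  rw [Complex.sub_re, abs_le] at hre
  linarith

theorem ker_linearCombination_le (hmor : IsTwoStatisticalMorphism ρ Γ)
    (hΓ : ∀ θ, (Γ θ).IsHermitian) :
    LinearMap.ker (linearCombination ℝ ρ) ≤ LinearMap.ker (linearCombination ℝ Γ) := by
  intro x hx
  rw [LinearMap.mem_ker] at hx ⊢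
  have hpos : ∀ y, linearCombination ℝ ρ y = 0 → (linearCombination ℝ Γ y).PosSemidef :=
    fun y hy => hmor.posSemidef_linearCombination hΓ (hy ▸ .zero)
  open scoped MatrixOrder in
  exact le_antisymm (by simpa using (hpos (-x) (by simp [hx])).nonneg) (hpos x hx).nonneg

end IsTwoStatisticalMorphism

theorem statistical_morphism_extension_general {n m : ℕ} {Θ : Type*}
    (ρ : Θ → Matrix (Fin n) (Fin n) ℂ)
    (hρ : ∀ θ, (ρ θ).PosSemidef ∧ (ρ θ).trace = 1)
    (hspan : ∀ A : Matrix (Fin n) (Fin n) ℂ, A.IsHermitian →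
      A ∈ Submodule.span ℝ (Set.range ρ))
    (Γ : Θ → Matrix (Fin m) (Fin m) ℂ)
    (hΓ : ∀ θ, (Γ θ).PosSemidef ∧ (Γ θ).trace = 1)
    (hmor : ∀ ε > (0 : ℝ), ∀ M : Matrix (Fin m) (Fin m) ℂ, IsEffect M →
      ∃ M' : Matrix (Fin n) (Fin n) ℂ, IsEffect M' ∧
        ∀ θ, ‖(Γ θ * M).trace - (ρ θ * M').trace‖ < ε / 2) :
    ∃ Γ' : Matrix (Fin n) (Fin n) ℂ →ₗ[ℝ] Matrix (Fin m) (Fin m) ℂ,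
      (∀ θ, Γ' (ρ θ) = Γ θ) ∧
      (∀ A : Matrix (Fin n) (Fin n) ℂ, A.PosSemidef → (Γ' A).PosSemidef) ∧
      (∀ A : Matrix (Fin n) (Fin n) ℂ, A.IsHermitian → (Γ' A).trace = A.trace) ∧
      (∀ Γ'' : Matrix (Fin n) (Fin n) ℂ →ₗ[ℝ] Matrix (Fin m) (Fin m) ℂ,
        (∀ θ, Γ'' (ρ θ) = Γ θ) →
        ∀ A : Matrix (Fin n) (Fin n) ℂ, A.IsHermitian → Γ'' A = Γ' A) := by
  have hstat : IsTwoStatisticalMorphism ρ Γ := hmor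
  have hΓherm θ : (Γ θ).IsHermitian := (hΓ θ).1.isHermitian
  obtain ⟨Γ', hΓ'⟩ :=
    LinearMap.exists_comp_eq_of_ker_le (hstat.ker_linearCombination_le hΓherm)
  have hΓ'_lc x : Γ' (Finsupp.linearCombination ℝ ρ x) = Finsupp.linearCombination ℝ Γ x :=
    LinearMap.congr_fun hΓ' x
  have hext θ : Γ' (ρ θ) = Γ θ := by simpa using hΓ'_lc (Finsupp.single θ 1)
  have hherm A (hA : A.IsHermitian) : ∃ x, Finsupp.linearCombination ℝ ρ x = A := by
    rw [← LinearMap.mem_range, Finsupp.range_linearCombination]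
    exact hspan A hA
  refine ⟨Γ', hext, fun A hA => ?_, fun A hA => ?_, fun Γ'' hΓ'' A hA => ?_⟩
  · obtain ⟨x, rfl⟩ := hherm A hA.isHermitian
    exact hΓ'_lc x ▸ hstat.posSemidef_linearCombination hΓherm hA
  · obtain ⟨x, rfl⟩ := hherm A hA
    simp only [hΓ'_lc, trace_linearCombination, (hρ _).2, (hΓ _).2]
  · exact LinearMap.eqOn_span' (by rintro _ ⟨θ, rfl⟩; exact (hΓ'' θ).trans (hext θ).symm)
      (hspan A hA)

/-- If the density matrices `ρ_θ` span (over ℝ) all Hermitian matrices and `Γ` is a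
2-statistical morphism on `{ρ_θ}`, then `Γ` extends uniquely to a linear, positive,
trace preserving map on all Hermitian matrices. -/
theorem statistical_morphism_extension {n m : ℕ} {Θ : Type*}
    (ρ : Θ → Matrix (Fin n) (Fin n) ℂ)
    (hρ : ∀ θ, (ρ θ).PosSemidef ∧ (ρ θ).trace = 1)
    (hspan : ∀ A : Matrix (Fin n) (Fin n) ℂ, A.IsHermitian →
      A ∈ Submodule.span ℝ (Set.range ρ))
    (Γ : Θ → Matrix (Fin m) (Fin m) ℂ)
    (hΓ : ∀ θ, (Γ θ).PosSemidef ∧ (Γ θ).trace = 1)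
    (hwd : ∀ θ θ', ρ θ = ρ θ' → Γ θ = Γ θ')
    (hmor : ∀ ε > (0 : ℝ), ∀ M : Matrix (Fin m) (Fin m) ℂ, IsEffect M →
      ∃ M' : Matrix (Fin n) (Fin n) ℂ, IsEffect M' ∧
        ∀ θ, ‖(Γ θ * M).trace - (ρ θ * M').trace‖ < ε / 2) :
    ∃ Γ' : Matrix (Fin n) (Fin n) ℂ →ₗ[ℝ] Matrix (Fin m) (Fin m) ℂ,
      (∀ θ, Γ' (ρ θ) = Γ θ) ∧
      (∀ A : Matrix (Fin n) (Fin n) ℂ, A.PosSemidef → (Γ' A).PosSemidef) ∧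
      (∀ A : Matrix (Fin n) (Fin n) ℂ, A.IsHermitian → (Γ' A).trace = A.trace) ∧
      (∀ Γ'' : Matrix (Fin n) (Fin n) ℂ →ₗ[ℝ] Matrix (Fin m) (Fin m) ℂ,
        (∀ θ, Γ'' (ρ θ) = Γ θ) →
        ∀ A : Matrix (Fin n) (Fin n) ℂ, A.IsHermitian → Γ'' A = Γ' A) :=
  statistical_morphism_extension_general ρ hρ hspan Γ hΓ hmor
end
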